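/- For every binary relation R on 𝔐(X), the operated congruence ⟨R⟩ generated by R equals (R^c)^e, the equivalence relation generated by R^c. -/
import Mathlib


namespace OpMon

/-- Letters of bracketed words: either a variable or a bracketed word. -/
inductive Letter (X : Type) : Type
  | of : X → Letter X
  | br : List (Letter X) → Letter X

/-- The free operated monoid `𝔐(X)`, modeled as lists of letters (free monoid on letters). -/
abbrev M (X : Type) := List (Letter X)

/-- The operator `⌊ ⌋` on `𝔐(X)`. -/
def L {X : Type} (w : M X) : M X := [Letter.br w]

mutual
  /-- Substitute each variable by a word (letter version). -/
  def bindL {Y Z : Type} : Letter Y → (Y → M Z) → M Z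
    | .of y, f => f y
    | .br w, f => [.br (bindW w f)]
  /-- Substitute each variable by a word (word version). -/
  def bindW {Y Z : Type} : M Y → (Y → M Z) → M Z
    | [], _ => []
    | a :: as, f => bindL a f ++ bindW as f
end

mutual
  /-- Count occurrences of variables satisfying `p` (letter version). -/
  def cntL {Y : Type} (p : Y → Bool) : Letter Y → ℕ
    | .of y => if p y then 1 else 0
    | .br w => cntW p w
  /-- Count occurrences of variables satisfying `p` (word version). -/
  def cntW {Y : Type} (p : Y → Bool) : M Y → ℕ
    | [] => 0
    | a :: as => cntL p a + cntW p as
end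

/-- The star letter `⋆`, modeled as `none`. -/
def starW {X : Type} : M (Option X) := [Letter.of none]

/-- `q` is a `⋆`-bracketed word: exactly one occurrence of `⋆`. -/
def IsStar {X : Type} (q : M (Option X)) : Prop :=
  cntW (fun o => o.isNone) q = 1

/-- Substitution `q|_u` of `u` for `⋆`. -/
def sub {X : Type} (q : M (Option X)) (u : M X) : M X :=
  bindW q (fun o => Option.elim o u (fun x => [Letter.of x]))

/-- Embed `𝔐(X)` into `𝔐(X ∪ {⋆})`. -/
def emb {X : Type} (w : M X) : M (Option X) :=
  bindW w (fun x => [Letter.of (some x)])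

/-- Substitute a `⋆`-word `r` for the `⋆` of `q`, yielding a word on `X ∪ {⋆}`. -/
def subS {X : Type} (q r : M (Option X)) : M (Option X) :=
  bindW q (fun o => Option.elim o r (fun x => [Letter.of (some x)]))

/-- `p` is a `(⋆₁,⋆₂)`-bracketed word (⋆₁ = `none`, ⋆₂ = `some none`). -/
def IsStar2 {X : Type} (p : M (Option (Option X))) : Prop :=
  cntW (fun o => o.isNone) p = 1 ∧
  cntW (fun o => match o with | some none => true | _ => false) p = 1

/-- Substitution `p|_{u₁,u₂}`. -/
def sub2 {X : Type} (p : M (Option (Option X))) (u₁ u₂ : M X) : M X :=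
  bindW p (fun o => match o with
    | none => u₁
    | some none => u₂
    | some (some x) => [Letter.of x])

/-- Substitution `p|_{u₁,⋆₂}`, a `⋆`-word. -/
def sub2L {X : Type} (p : M (Option (Option X))) (u₁ : M X) : M (Option X) :=
  bindW p (fun o => match o with
    | none => emb u₁
    | some none => [Letter.of none]
    | some (some x) => [Letter.of (some x)])

/-- Substitution `p|_{⋆₁,u₂}`, a `⋆`-word. -/
def sub2R {X : Type} (p : M (Option (Option X))) (u₂ : M X) : M (Option X) :=
  bindW p (fun o => match o with
    | none => [Letter.of none]
    | some none => emb u₂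
    | some (some x) => [Letter.of (some x)])

/-- `R^c`. -/
def Rc {X : Type} (R : Set (M X × M X)) : Set (M X × M X) :=
  {p | ∃ q a b, IsStar q ∧ (a, b) ∈ R ∧ p = (sub q a, sub q b)}

/-- Inverse relation `R⁻¹`. -/
def relInv {X : Type} (R : Set (M X × M X)) : Set (M X × M X) :=
  {p | (p.2, p.1) ∈ R}

/-- Closure under right mult. (C1), left mult. (C2), and the operator (C3). -/
def Closed {X : Type} (S : Set (M X × M X)) : Prop :=
  ∀ a b, (a, b) ∈ S → ∀ c : M X,
    (a ++ c, b ++ c) ∈ S ∧ (c ++ a, c ++ b) ∈ S ∧ (L a, L b) ∈ S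

/-- Composition of relations. -/
def relComp {X : Type} (R S : Set (M X × M X)) : Set (M X × M X) :=
  {p | ∃ c, (p.1, c) ∈ R ∧ (c, p.2) ∈ S}

/-- `relPow R n = R^(n+1)`. -/
def relPow {X : Type} (R : Set (M X × M X)) : ℕ → Set (M X × M X)
  | 0 => R
  | n + 1 => relComp (relPow R n) R

/-- Operated congruence. -/
def IsOpCong {X : Type} (T : Set (M X × M X)) : Prop :=
  (∀ a, (a, a) ∈ T) ∧ (∀ a b, (a, b) ∈ T → (b, a) ∈ T) ∧
  (∀ a b c, (a, b) ∈ T → (b, c) ∈ T → (a, c) ∈ T) ∧ Closed T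

/-- The operated congruence `⟨R⟩` generated by `R`. -/
def ocong {X : Type} (R : Set (M X × M X)) : Set (M X × M X) :=
  ⋂₀ {T | IsOpCong T ∧ R ⊆ T}

/-- Equivalence relation (as a set of pairs). -/
def IsEqv {X : Type} (T : Set (M X × M X)) : Prop :=
  (∀ a, (a, a) ∈ T) ∧ (∀ a b, (a, b) ∈ T → (b, a) ∈ T) ∧
  (∀ a b c, (a, b) ∈ T → (b, c) ∈ T → (a, c) ∈ T)

/-- The equivalence `T^e` generated by `T`. -/
def eqgen {X : Type} (T : Set (M X × M X)) : Set (M X × M X) :=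
  ⋂₀ {E | IsEqv E ∧ T ⊆ E}

/-- A monomial order: a well-founded linear order compatible with the operations. -/
def IsMonomialOrder {X : Type} (lt : M X → M X → Prop) : Prop :=
  WellFounded lt ∧
  (∀ a b, a = b ∨ lt a b ∨ lt b a) ∧
  (∀ a b c, lt a b → lt b c → lt a c) ∧
  (∀ u v w, lt u v → lt (u ++ w) (v ++ w) ∧ lt (w ++ u) (w ++ v) ∧ lt (L u) (L v))

/-- The term-rewriting system `Π_S`. -/
def PiS {X : Type} (lt : M X → M X → Prop) (S : Set (M X × M X)) : Set (M X × M X) :=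
  {p | ∃ q t v, IsStar q ∧ ((t, v) ∈ S ∨ (v, t) ∈ S) ∧ lt v t ∧ p = (sub q t, sub q v)}

/-- One-step rewriting. -/
def Rew {X : Type} (lt : M X → M X → Prop) (S : Set (M X × M X)) (a b : M X) : Prop :=
  (a, b) ∈ PiS lt S

/-- Joinability under `Π_S`. -/
def Joinable {X : Type} (lt : M X → M X → Prop) (S : Set (M X × M X)) (f g : M X) : Prop :=
  ∃ h, Relation.ReflTransGen (Rew lt S) f h ∧ Relation.ReflTransGen (Rew lt S) g h

/-- Termination of `Π_S`. -/
def Terminating {X : Type} (lt : M X → M X → Prop) (S : Set (M X × M X)) : Prop :=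
  ¬ ∃ f : ℕ → M X, ∀ n, Rew lt S (f n) (f (n + 1))

/-- Confluence of `Π_S`. -/
def Confluent {X : Type} (lt : M X → M X → Prop) (S : Set (M X × M X)) : Prop :=
  ∀ f g h, Relation.ReflTransGen (Rew lt S) f g → Relation.ReflTransGen (Rew lt S) f h →
    Joinable lt S g h

/-- Irreducible elements: `𝔐(X) \ Dom(Π_S)`. -/
def Irr {X : Type} (lt : M X → M X → Prop) (S : Set (M X × M X)) : Set (M X) :=
  {f | ∀ g, ¬ Rew lt S f g}

/-- Predecessors of `a`. -/
def Pre {X : Type} (lt : M X → M X → Prop) (S : Set (M X × M X)) (a : M X) : Set (M X) :=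
  {f | Relation.ReflTransGen (Rew lt S) f a}

/-- `W` is a section of `⟨S⟩`: every congruence class meets `W` in exactly one element. -/
def IsSection {X : Type} (S : Set (M X × M X)) (W : Set (M X)) : Prop :=
  ∀ a : M X, ∃! w, w ∈ W ∧ (a, w) ∈ ocong S

/-- Separated placements `(u₁,q₁)`, `(u₂,q₂)` in `w`. -/
def Separated {X : Type} (u₁ : M X) (q₁ : M (Option X)) (u₂ : M X) (q₂ : M (Option X))
    (w : M X) : Prop :=
  ∃ p, IsStar2 p ∧ q₁ = sub2R p u₂ ∧ q₂ = sub2L p u₁ ∧ w = sub2 p u₁ u₂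

/-- Nested placements: one context is a subcontext of the other. -/
def Nested {X : Type} (q₁ q₂ : M (Option X)) : Prop :=
  ∃ q, IsStar q ∧ (q₂ = subS q₁ q ∨ q₁ = subS q₂ q)

/-- Intersecting placements `(u₁,q₁)`, `(u₂,q₂)` in `w`. -/
def Intersecting {X : Type} (w u₁ : M X) (q₁ : M (Option X)) (u₂ : M X)
    (q₂ : M (Option X)) : Prop :=
  ∃ q a b c, IsStar q ∧ a ≠ ([] : M X) ∧ b ≠ ([] : M X) ∧ c ≠ ([] : M X) ∧
    w = sub q (a ++ b ++ c) ∧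
    ((q₁ = subS q (starW ++ emb c) ∧ q₂ = subS q (emb a ++ starW)) ∨
     (q₁ = subS q (emb a ++ starW) ∧ q₂ = subS q (starW ++ emb c)))

/-- Defining relations of the free `∗`-monoid. -/
def SStar (X : Type) : Set (M X × M X) :=
  {p | (∃ w : M X, p = (L (L w), w)) ∨
       (∃ u v : M X, u ≠ [] ∧ v ≠ [] ∧ p = (L (u ++ v), L v ++ L u)) ∨
       p = (L [], [])}

/-- Defining relations of the free group. -/
def SGrp (X : Type) : Set (M X × M X) :=
  {p | (∃ w : M X, p = (L (L w), w)) ∨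
       (∃ u v : M X, u ≠ [] ∧ v ≠ [] ∧ p = (L (u ++ v), L v ++ L u)) ∨
       (∃ w : M X, p = (L w ++ w, [])) ∨
       (∃ w : M X, p = (w ++ L w, []))}


section Aux

variable {X : Type}

/-- The substitution function used in `sub`. -/
def fsub (u : M X) : Option X → M X := fun o => Option.elim o u (fun x => [Letter.of x])

lemma sub_def (q : M (Option X)) (u : M X) : sub q u = bindW q (fsub u) := rfl

lemma bindW_append {Y Z : Type} (u v : M Y) (F : Y → M Z) :
    bindW (u ++ v) F = bindW u F ++ bindW v F := by
  induction u with
  | nil => rfl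
  | cons l ls ih => simp [bindW, ih]

lemma cntW_append {Y : Type} (p : Y → Bool) (u v : M Y) :
    cntW p (u ++ v) = cntW p u + cntW p v := by
  induction u with
  | nil => simp [cntW]
  | cons l ls ih => simp [cntW, ih]; omega

mutual
  lemma bindL_congr_zero {F G : Option X → M X}
      (h : ∀ x, F (some x) = G (some x)) :
      ∀ l : Letter (Option X), cntL (fun o => o.isNone) l = 0 → bindL l F = bindL l G
    | .of y, h0 => by
        cases y with
        | none => simp [cntL] at h0
        | some x => simp [bindL, h]
    | .br w, h0 => by
        simp only [bindL]
        rw [bindW_congr_zero h w (by simpa [cntL] using h0)]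
  lemma bindW_congr_zero {F G : Option X → M X}
      (h : ∀ x, F (some x) = G (some x)) :
      ∀ w : M (Option X), cntW (fun o => o.isNone) w = 0 → bindW w F = bindW w G
    | [], _ => rfl
    | l :: ls, h0 => by
        simp only [cntW] at h0
        simp only [bindW]
        rw [bindL_congr_zero h l (by omega), bindW_congr_zero h ls (by omega)]
end

lemma fsub_agree (a b : M X) : ∀ x, fsub a (some x) = fsub b (some x) := fun _ => rfl

mutual
  lemma oneL {T : Set (M X × M X)} (hT : Closed T) {a b : M X} (hab : (a, b) ∈ T) :
      ∀ l : Letter (Option X), cntL (fun o => o.isNone) l = 1 →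
        (bindL l (fsub a), bindL l (fsub b)) ∈ T
    | .of y, h1 => by
        cases y with
        | none => simpa [bindL, fsub] using hab
        | some x => simp [cntL] at h1
    | .br w, h1 => by
        have := oneW hT hab w (by simpa [cntL] using h1)
        simpa [bindL, L] using (hT _ _ this []).2.2
  lemma oneW {T : Set (M X × M X)} (hT : Closed T) {a b : M X} (hab : (a, b) ∈ T) :
      ∀ w : M (Option X), cntW (fun o => o.isNone) w = 1 →
        (bindW w (fsub a), bindW w (fsub b)) ∈ T
    | [], h1 => by simp [cntW] at h1
    | l :: ls, h1 => by
        simp only [cntW] at h1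
        simp only [bindW]
        have hcases : (cntL (fun o => o.isNone) l = 0 ∧ cntW (fun o => o.isNone) ls = 1) ∨
            (cntL (fun o => o.isNone) l = 1 ∧ cntW (fun o => o.isNone) ls = 0) := by omega
        rcases hcases with ⟨hl, hls⟩ | ⟨hl, hls⟩
        · rw [bindL_congr_zero (fsub_agree a b) l hl]
          exact (hT _ _ (oneW hT hab ls hls) _).2.1
        · rw [bindW_congr_zero (fsub_agree a b) ls hls]
          exact (hT _ _ (oneL hT hab l hl) _).1
end

mutual
  lemma cntW_embL : ∀ l : Letter X,
      cntW (fun o => o.isNone) (bindL l (fun x => [Letter.of (some x)])) = 0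
    | .of x => by simp [bindL, cntW, cntL]
    | .br w => by
        simp only [bindL, cntW, cntL]
        have := cntW_embW w
        omega
  lemma cntW_embW : ∀ w : M X,
      cntW (fun o => o.isNone) (bindW w (fun x => [Letter.of (some x)])) = 0
    | [] => rfl
    | l :: ls => by
        simp only [bindW, cntW_append]
        rw [cntW_embL l, cntW_embW ls]
end

lemma cntW_emb (w : M X) : cntW (fun o => o.isNone) (emb w) = 0 := cntW_embW w

mutual
  lemma sub_embL (u : M X) : ∀ l : Letter X,
      bindW (bindL l (fun x => [Letter.of (some x)])) (fsub u) = [l]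
    | .of x => by simp [bindL, bindW, fsub]
    | .br w => by
        simp only [bindL, bindW, List.append_nil]
        rw [sub_embW u w]
  lemma sub_embW (u : M X) : ∀ w : M X,
      bindW (bindW w (fun x => [Letter.of (some x)])) (fsub u) = w
    | [] => rfl
    | l :: ls => by
        simp only [bindW, bindW_append]
        rw [sub_embL u l, sub_embW u ls]
        rfl
end

lemma sub_emb (w u : M X) : sub (emb w) u = w := sub_embW u w

lemma sub_append (q r : M (Option X)) (u : M X) :
    sub (q ++ r) u = sub q u ++ sub r u := bindW_append q r (fsub u)

lemma isStar_starW : IsStar (starW : M (Option X)) := by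
  simp [IsStar, starW, cntW, cntL]

lemma sub_starW (u : M X) : sub (starW : M (Option X)) u = u := by
  simp [sub, starW, bindW, bindL]

lemma closed_Rc (R : Set (M X × M X)) : Closed (Rc R) := by
  rintro a b ⟨q, s, t, hq, hst, heq⟩ c
  injection heq with ha hb
  subst ha; subst hb
  refine ⟨⟨q ++ emb c, s, t, ?_, hst, by simp [sub_append, sub_emb]⟩,
    ⟨emb c ++ q, s, t, ?_, hst, by simp [sub_append, sub_emb]⟩,
    ⟨[Letter.br q], s, t, ?_, hst, ?_⟩⟩
  · simp [IsStar, cntW_append, cntW_emb]; exact hq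
  · simp [IsStar, cntW_append, cntW_emb]; exact hq
  · simpa [IsStar, cntW, cntL] using hq
  · simp [L, sub, bindW, bindL]

lemma R_subset_Rc (R : Set (M X × M X)) : R ⊆ Rc R := by
  rintro ⟨a, b⟩ hab
  exact ⟨starW, a, b, isStar_starW, hab, by rw [sub_starW, sub_starW]⟩

lemma isEqv_eqgen (T : Set (M X × M X)) : IsEqv (eqgen T) := by
  refine ⟨fun a E hE => hE.1.1 a, fun a b h E hE => hE.1.2.1 a b (h E hE),
    fun a b c h1 h2 E hE => hE.1.2.2 a b c (h1 E hE) (h2 E hE)⟩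

lemma subset_eqgen (T : Set (M X × M X)) : T ⊆ eqgen T :=
  fun p hp E hE => hE.2 hp

lemma eqgen_le {T E : Set (M X × M X)} (hE : IsEqv E) (hTE : T ⊆ E) : eqgen T ⊆ E :=
  fun p hp => hp E ⟨hE, hTE⟩

lemma eqgen_eq_eqvGen (T : Set (M X × M X)) :
    eqgen T = {p | Relation.EqvGen (fun a b => (a, b) ∈ T) p.1 p.2} := by
  apply Set.Subset.antisymm
  · exact eqgen_le ⟨fun a => Relation.EqvGen.refl a,
      fun a b h => Relation.EqvGen.symm a b h,
      fun a b c h1 h2 => Relation.EqvGen.trans a b c h1 h2⟩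
      (fun p hp => Relation.EqvGen.rel p.1 p.2 hp)
  · rintro ⟨a, b⟩ h
    have h' : Relation.EqvGen (fun a b => (a, b) ∈ T) a b := h
    clear h
    induction h' with
    | rel x y hxy => exact subset_eqgen T hxy
    | refl x => exact (isEqv_eqgen T).1 x
    | symm x y _ ih => exact (isEqv_eqgen T).2.1 x y ih
    | trans x y z _ _ ih1 ih2 => exact (isEqv_eqgen T).2.2 x y z ih1 ih2

lemma closed_eqgen {T : Set (M X × M X)} (hT : Closed T) : Closed (eqgen T) := by
  rw [eqgen_eq_eqvGen]
  intro a b hab c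
  have hab' : Relation.EqvGen (fun a b => (a, b) ∈ T) a b := hab
  clear hab
  refine ⟨?_, ?_, ?_⟩ <;>
  · induction hab' with
    | rel x y hxy =>
        rcases hT x y hxy c with ⟨h1, h2, h3⟩
        first
          | exact Relation.EqvGen.rel _ _ h1
          | exact Relation.EqvGen.rel _ _ h2
          | exact Relation.EqvGen.rel _ _ h3
    | refl x => exact Relation.EqvGen.refl _
    | symm x y _ ih => exact Relation.EqvGen.symm _ _ ih
    | trans x y z _ _ ih1 ih2 => exact Relation.EqvGen.trans _ _ _ ih1 ih2

lemma isOpCong_ocong (R : Set (M X × M X)) : IsOpCong (ocong R) := by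
  refine ⟨fun a E hE => hE.1.1 a, fun a b h E hE => hE.1.2.1 a b (h E hE),
    fun a b c h1 h2 E hE => hE.1.2.2.1 a b c (h1 E hE) (h2 E hE),
    fun a b h c => ⟨fun E hE => (hE.1.2.2.2 a b (h E hE) c).1,
      fun E hE => (hE.1.2.2.2 a b (h E hE) c).2.1,
      fun E hE => (hE.1.2.2.2 a b (h E hE) c).2.2⟩⟩

lemma R_subset_ocong (R : Set (M X × M X)) : R ⊆ ocong R :=
  fun p hp E hE => hE.2 hp

lemma ocong_le {R T : Set (M X × M X)} (hT : IsOpCong T) (hRT : R ⊆ T) : ocong R ⊆ T :=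
  fun p hp => hp T ⟨hT, hRT⟩

lemma Rc_subset_ocong (R : Set (M X × M X)) : Rc R ⊆ ocong R := by
  rintro ⟨a, b⟩ ⟨q, s, t, hq, hst, heq⟩
  injection heq with ha hb
  subst ha; subst hb
  exact oneW (isOpCong_ocong R).2.2.2 (R_subset_ocong R hst) q hq

end Aux

/-- `⟨R⟩ = (R^c)^e`. -/
theorem ocong_eq_eqgen_Rc (X : Type) (R : Set (M X × M X)) :
    ocong R = eqgen (Rc R) := by
  apply Set.Subset.antisymm
  · apply ocong_le
    · have hE := isEqv_eqgen (Rc R)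
      exact ⟨hE.1, hE.2.1, hE.2.2, closed_eqgen (closed_Rc R)⟩
    · exact (R_subset_Rc R).trans (subset_eqgen _)
  · exact eqgen_le ⟨(isOpCong_ocong R).1, (isOpCong_ocong R).2.1, (isOpCong_ocong R).2.2.1⟩
      (Rc_subset_ocong R)

end OpMon
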